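/- Let G be a finite group such that Δ(G) is a disconnected graph and its complement Δ(G)ᶜ is non-bipartite. Then Δ(G)ᶜ contains an odd dominating set; in fact, any isolated vertex u of Δ(G) gives the singleton odd dominating set {u} of Δ(G)ᶜ. -/

import Mathlib

open CategoryTheory

noncomputable section

/-- The set of degrees of irreducible complex characters of the finite group `G`. -/
def charDegrees (G : Type) [Group G] [Fintype G] : Set ℕ :=
  {n | ∃ V : FDRep ℂ G, Simple V ∧ Module.finrank ℂ V = n}

/-- `ρ(G)`: the set of primes dividing some irreducible character degree of `G`. -/
def charPrimes (G : Type) [Group G] [Fintype G] : Set ℕ :=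
  {p | p.Prime ∧ ∃ n ∈ charDegrees G, p ∣ n}

/-- The character graph `Δ(G)` on the vertex set `ρ(G)`:
`p ~ q` iff `p ≠ q` and `p*q` divides some irreducible character degree. -/
def charGraph (G : Type) [Group G] [Fintype G] : SimpleGraph (charPrimes G) where
  Adj p q := p ≠ q ∧ ∃ n ∈ charDegrees G, (p : ℕ) * q ∣ n
  symm := by
    constructor
    rintro p q ⟨h, n, hn, hd⟩
    exact ⟨h.symm, n, hn, by rwa [mul_comm]⟩
  loopless := by constructor; rintro p ⟨h, _⟩; exact h rfl

/-- `D` is a dominating set of `Γ`. -/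
def Dominates {V : Type*} (Γ : SimpleGraph V) (D : Set V) : Prop :=
  ∀ w ∉ D, ∃ d ∈ D, Γ.Adj w d

/-- `D` is an odd dominating set of `Γ`. -/
def IsOddDominatingSet {V : Type*} (Γ : SimpleGraph V) (D : Set V) : Prop :=
  Dominates Γ D ∧ ∀ x ∈ D, ∃ c : Γ.Walk x x, c.IsCycle ∧ Odd c.length

open SimpleGraph in
lemma triangle_cycle {V : Type*} {Γ : SimpleGraph V} {x a b : V}
    (hxa : Γ.Adj x a) (hab : Γ.Adj a b) (hbx : Γ.Adj b x) :
    ∃ c : Γ.Walk x x, c.IsCycle ∧ Odd c.length := by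
  refine ⟨.cons hxa (.cons hab (.cons hbx .nil)), ?_, ⟨1, by simp⟩⟩
  simp [Walk.isCycle_def, Walk.isTrail_def, hxa.ne, hab.ne, hbx.ne, hxa.ne',
    hab.ne', hbx.ne', Sym2.eq_iff]

open SimpleGraph in
lemma exists_edge_avoiding {V : Type*} {Γ : SimpleGraph V} (S : Set V)
    (hnb : ¬ Γ.Colorable 2) :
    ∃ a b, Γ.Adj a b ∧ ((a ∈ S ∧ b ∈ S) ∨ (a ∉ S ∧ b ∉ S)) := by
  classical
  by_contra h
  push_neg at h
  apply hnb
  refine ⟨Coloring.mk (fun x => if x ∈ S then 0 else 1) ?_⟩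
  intro x y hxy
  obtain ⟨h1, h2⟩ := h x y hxy
  by_cases hx : x ∈ S
  · have hy : y ∉ S := fun hy => h1 hx hy
    simp [hx, hy]
  · have hy : y ∈ S := h2 hx
    simp [hx, hy]

/-- if Δ(G) is disconnected and Δ(G)ᶜ non-bipartite, then Δ(G)ᶜ contains an
odd dominating set; indeed any isolated vertex u of Δ(G) gives the odd dominating set {u}. -/
theorem stmt8 (G : Type) [Group G] [Fintype G]
    (hdisc : ¬ (charGraph G).Connected)
    (hnb : ¬ (charGraph G)ᶜ.Colorable 2) :
    (∃ D : Set (charPrimes G), D.Nonempty ∧ IsOddDominatingSet (charGraph G)ᶜ D) ∧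
    ∀ u : charPrimes G, (∀ w, ¬ (charGraph G).Adj u w) →
      IsOddDominatingSet (charGraph G)ᶜ {u} := by
  classical
  have hne : Nonempty (charPrimes G) := by
    by_contra h
    rw [not_nonempty_iff] at h
    exact hnb ⟨SimpleGraph.Coloring.mk (fun x => isEmptyElim x) (fun {x} => isEmptyElim x)⟩
  constructor
  · -- part 1
    have hpre : ¬ (charGraph G).Preconnected := fun h => hdisc ⟨h⟩
    rw [SimpleGraph.Preconnected] at hpre
    push_neg at hpre
    obtain ⟨u, v, huv⟩ := hpre
    set S : Set (charPrimes G) := {x | (charGraph G).Reachable u x} with hS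
    have hu : u ∈ S := SimpleGraph.Reachable.refl u
    have hv : v ∉ S := huv
    have cross : ∀ x y, x ∈ S → y ∉ S → ((charGraph G)ᶜ).Adj x y := by
      intro x y hx hy
      rw [SimpleGraph.compl_adj]
      refine ⟨fun h => hy (h ▸ hx), fun hadj => hy (hx.trans hadj.reachable)⟩
    obtain ⟨a, b, hab, hcase⟩ := exists_edge_avoiding S hnb
    rcases hcase with ⟨ha, hb⟩ | ⟨ha, hb⟩
    · -- edge inside S, take D = Sᶜ
      refine ⟨Sᶜ, ⟨v, hv⟩, ?_, ?_⟩
      · intro w hw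
        simp only [Set.mem_compl_iff, not_not] at hw
        exact ⟨v, hv, cross w v hw hv⟩
      · intro x hx
        exact triangle_cycle ((cross a x ha hx).symm) hab (cross b x hb hx)
    · -- edge outside S, take D = S
      refine ⟨S, ⟨u, hu⟩, ?_, ?_⟩
      · intro w hw
        exact ⟨u, hu, (cross u w hu hw).symm⟩
      · intro x hx
        exact triangle_cycle (cross x a hx ha) hab ((cross x b hx hb).symm)
  · -- part 2
    intro u hiso
    have hadj : ∀ w, w ≠ u → ((charGraph G)ᶜ).Adj u w := by
      intro w hw
      rw [SimpleGraph.compl_adj]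
      exact ⟨hw.symm, hiso w⟩
    obtain ⟨a, b, hab, hcase⟩ := exists_edge_avoiding {u}ᶜ hnb
    have hab' : a ≠ u ∧ b ≠ u := by
      rcases hcase with ⟨ha, hb⟩ | ⟨ha, hb⟩
      · constructor <;> simpa using ‹_ ∈ ({u}ᶜ : Set _)›
      · exfalso
        simp only [Set.mem_compl_iff, Set.mem_singleton_iff, not_not] at ha hb
        exact hab.ne (ha.trans hb.symm)
    obtain ⟨hau, hbu⟩ := hab'
    refine ⟨?_, ?_⟩
    · intro w hw
      simp only [Set.mem_singleton_iff] at hw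
      exact ⟨u, rfl, (hadj w hw).symm⟩
    · intro x hx
      simp only [Set.mem_singleton_iff] at hx
      subst hx
      exact triangle_cycle (hadj a hau) hab ((hadj b hbu).symm)
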